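/- arXiv:0711.3931 — 4 statements merged into one kernel-verified Lean document; each statement's English description precedes it below -/
import Mathlib

section
/- Let q ≥ 2, p = q³ + q⁴, and let h ∈ S^{q−1} be a unit vector, θ ∈ ℝ, and u, w ∈ ℝ^q with ⟨h, u⟩ = ⟨h, w⟩ = 0. Define D(u) = ( cos θ (u⊗h⊗h + h⊗u⊗h + h⊗h⊗u), sin θ (u⊗h⊗h⊗h + h⊗u⊗h⊗h + h⊗h⊗u⊗h + h⊗h⊗h⊗u) ) ∈ ℝ^p and x_θ = (−sin θ · h^{⊗3}, cos θ · h^{⊗4}) ∈ ℝ^p. Then ⟨D(u), D(w)⟩ = (3 cos²θ + 4 sin²θ) ⟨u, w⟩, ⟨D(u), x_θ⟩ = 0, ⟨x_θ, x_θ⟩ = 1, ⟨x(h,θ), D(u)⟩ = 0, and ⟨x(h,θ), x_θ⟩ = 0. -/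
open scoped RealInnerProductSpace BigOperators
open MeasureTheory ProbabilityTheory Real Filter

noncomputable section

/-- The threefold Kronecker power `h^{⊗3} ∈ ℝ^{q³}`, with entries `h i * h j * h k`. -/
def kron3 {q : ℕ} (h : EuclideanSpace ℝ (Fin q)) :
    EuclideanSpace ℝ (Fin q × Fin q × Fin q) :=
  WithLp.toLp 2 (fun i => h i.1 * h i.2.1 * h i.2.2)

/-- The fourfold Kronecker power `h^{⊗4} ∈ ℝ^{q⁴}`, with entries `h i * h j * h k * h l`. -/
def kron4 {q : ℕ} (h : EuclideanSpace ℝ (Fin q)) :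
    EuclideanSpace ℝ (Fin q × Fin q × Fin q × Fin q) :=
  WithLp.toLp 2 (fun i => h i.1 * h i.2.1 * h i.2.2.1 * h i.2.2.2)

/-- `ℝ^p = ℝ^{q³} × ℝ^{q⁴}` with its standard Euclidean inner product, `p = q³ + q⁴`. -/
abbrev Rp (q : ℕ) :=
  EuclideanSpace ℝ ((Fin q × Fin q × Fin q) ⊕ (Fin q × Fin q × Fin q × Fin q))

/-- `x(h,θ) = (cos θ · h^{⊗3}, sin θ · h^{⊗4}) ∈ ℝ^p`. -/
def xMap {q : ℕ} (h : EuclideanSpace ℝ (Fin q)) (θ : ℝ) : Rp q :=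
  WithLp.toLp 2 (Sum.elim (fun i => Real.cos θ * kron3 h i) (fun i => Real.sin θ * kron4 h i))

/-- The tangent vector
`D(u) = (cos θ (u⊗h⊗h + h⊗u⊗h + h⊗h⊗u),
         sin θ (u⊗h⊗h⊗h + h⊗u⊗h⊗h + h⊗h⊗u⊗h + h⊗h⊗h⊗u)) ∈ ℝ^p`. -/
def Dvec {q : ℕ} (h u : EuclideanSpace ℝ (Fin q)) (θ : ℝ) : Rp q :=
  WithLp.toLp 2 (Sum.elim
    (fun i => Real.cos θ *
      (u i.1 * h i.2.1 * h i.2.2 + h i.1 * u i.2.1 * h i.2.2 + h i.1 * h i.2.1 * u i.2.2))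
    (fun i => Real.sin θ *
      (u i.1 * h i.2.1 * h i.2.2.1 * h i.2.2.2 + h i.1 * u i.2.1 * h i.2.2.1 * h i.2.2.2 +
        h i.1 * h i.2.1 * u i.2.2.1 * h i.2.2.2 + h i.1 * h i.2.1 * h i.2.2.1 * u i.2.2.2)))

/-- `x_θ = ∂x/∂θ = (−sin θ · h^{⊗3}, cos θ · h^{⊗4}) ∈ ℝ^p`. -/
def xTheta {q : ℕ} (h : EuclideanSpace ℝ (Fin q)) (θ : ℝ) : Rp q :=
  WithLp.toLp 2 (Sum.elim (fun i => -Real.sin θ * kron3 h i) (fun i => Real.cos θ * kron4 h i))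

/-!
Every vector involved is a combination of iterated Kronecker products of `h` and `u` (or `w`),
and the inner product of `a ⊗ b` with `c ⊗ d` is `⟪a, c⟫ * ⟪b, d⟫`. Expanding bilinearly,
`⟪h, h⟫ = 1` and `⟪h, u⟫ = ⟪h, w⟫ = 0` kill every cross term: in `⟪D u, D w⟫` only the terms
with `u` and `w` in the same slot survive, three in the cubic block and four in the quartic one.
-/

variable {α β : Type*}

def kronVec (a : EuclideanSpace ℝ α) (b : EuclideanSpace ℝ β) : EuclideanSpace ℝ (α × β) :=
  WithLp.toLp 2 fun i => a i.1 * b i.2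

local infixr:100 " ⊗ᵥ " => kronVec

@[simp]
lemma kronVec_apply (a : EuclideanSpace ℝ α) (b : EuclideanSpace ℝ β) (i : α × β) :
    (a ⊗ᵥ b) i = a i.1 * b i.2 := rfl

lemma inner_kronVec [Fintype α] [Fintype β]
    (a c : EuclideanSpace ℝ α) (b d : EuclideanSpace ℝ β) :
    ⟪a ⊗ᵥ b, c ⊗ᵥ d⟫ = ⟪a, c⟫ * ⟪b, d⟫ := by
  simp only [PiLp.inner_apply, kronVec_apply, RCLike.inner_apply, conj_trivial,
    Fintype.sum_prod_type, Finset.sum_mul_sum]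
  exact Finset.sum_congr rfl fun _ _ => Finset.sum_congr rfl fun _ _ => by ring

def euclideanSum (x : EuclideanSpace ℝ α) (y : EuclideanSpace ℝ β) : EuclideanSpace ℝ (α ⊕ β) :=
  WithLp.toLp 2 (Sum.elim x y)

lemma inner_euclideanSum [Fintype α] [Fintype β]
    (x x' : EuclideanSpace ℝ α) (y y' : EuclideanSpace ℝ β) :
    ⟪euclideanSum x y, euclideanSum x' y'⟫ = ⟪x, x'⟫ + ⟪y, y'⟫ := by
  simp [euclideanSum, PiLp.inner_apply, Fintype.sum_sum_type]

variable {q : ℕ} (h u : EuclideanSpace ℝ (Fin q)) (θ : ℝ)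

lemma kron3_eq_kronVec : kron3 h = h ⊗ᵥ h ⊗ᵥ h := by
  ext; simp [kron3, mul_assoc]

lemma kron4_eq_kronVec : kron4 h = h ⊗ᵥ h ⊗ᵥ h ⊗ᵥ h := by
  ext; simp [kron4, mul_assoc]

lemma xMap_eq_euclideanSum : xMap h θ = euclideanSum (cos θ • kron3 h) (sin θ • kron4 h) := rfl

lemma xTheta_eq_euclideanSum :
    xTheta h θ = euclideanSum (-sin θ • kron3 h) (cos θ • kron4 h) := by
  ext (i | i) <;> simp [xTheta, euclideanSum]

lemma Dvec_eq_euclideanSum :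
    Dvec h u θ = euclideanSum (cos θ • (u ⊗ᵥ h ⊗ᵥ h + h ⊗ᵥ u ⊗ᵥ h + h ⊗ᵥ h ⊗ᵥ u))
      (sin θ • (u ⊗ᵥ h ⊗ᵥ h ⊗ᵥ h + h ⊗ᵥ u ⊗ᵥ h ⊗ᵥ h + h ⊗ᵥ h ⊗ᵥ u ⊗ᵥ h + h ⊗ᵥ h ⊗ᵥ h ⊗ᵥ u)) := by
  ext (i | i) <;> simp [Dvec, euclideanSum] <;> ring

theorem tangent_frame_inner_products_general (q : ℕ)
    (h : EuclideanSpace ℝ (Fin q)) (hh : h ∈ Metric.sphere (0 : EuclideanSpace ℝ (Fin q)) 1)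
    (θ : ℝ) (u w : EuclideanSpace ℝ (Fin q))
    (hu : ⟪h, u⟫ = 0) (hw : ⟪h, w⟫ = 0) :
    ⟪Dvec h u θ, Dvec h w θ⟫ = (3 * Real.cos θ ^ 2 + 4 * Real.sin θ ^ 2) * ⟪u, w⟫ ∧
    ⟪Dvec h u θ, xTheta h θ⟫ = 0 ∧
    ⟪xTheta h θ, xTheta h θ⟫ = 1 ∧
    ⟪xMap h θ, Dvec h u θ⟫ = 0 ∧
    ⟪xMap h θ, xTheta h θ⟫ = 0 := by
  have hh_one : ⟪h, h⟫ = 1 := by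
    rw [real_inner_self_eq_norm_sq, mem_sphere_zero_iff_norm.mp hh, one_pow]
  have hu_symm : ⟪u, h⟫ = 0 := by rwa [real_inner_comm]
  simp only [Dvec_eq_euclideanSum, xMap_eq_euclideanSum, xTheta_eq_euclideanSum,
    kron3_eq_kronVec, kron4_eq_kronVec, inner_euclideanSum, inner_add_left, inner_add_right,
    real_inner_smul_left, real_inner_smul_right, inner_kronVec, hh_one, hu, hw, hu_symm]
  refine ⟨by ring, by ring, ?_, by ring, by ring⟩
  linear_combination sin_sq_add_cos_sq θ

/-- for a unit vector `h`, `θ ∈ ℝ`, and `u, w ⊥ h`: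
`⟨D(u), D(w)⟩ = (3cos²θ + 4sin²θ)⟨u,w⟩`, `⟨D(u), x_θ⟩ = 0`, `⟨x_θ, x_θ⟩ = 1`,
`⟨x(h,θ), D(u)⟩ = 0`, and `⟨x(h,θ), x_θ⟩ = 0`. -/
theorem tangent_frame_inner_products (q : ℕ) (hq : 2 ≤ q)
    (h : EuclideanSpace ℝ (Fin q)) (hh : h ∈ Metric.sphere (0 : EuclideanSpace ℝ (Fin q)) 1)
    (θ : ℝ) (u w : EuclideanSpace ℝ (Fin q))
    (hu : ⟪h, u⟫ = 0) (hw : ⟪h, w⟫ = 0) :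
    ⟪Dvec h u θ, Dvec h w θ⟫ = (3 * Real.cos θ ^ 2 + 4 * Real.sin θ ^ 2) * ⟪u, w⟫ ∧
    ⟪Dvec h u θ, xTheta h θ⟫ = 0 ∧
    ⟪xTheta h θ, xTheta h θ⟫ = 1 ∧
    ⟪xMap h θ, Dvec h u θ⟫ = 0 ∧
    ⟪xMap h θ, xTheta h θ⟫ = 0 :=
  tangent_frame_inner_products_general q h hh θ u w hu hw

end
end

section
/- Let q ≥ 3 be an integer and let e be an even integer with 2 ≤ e ≤ q−1. For every real v ≠ 0, setting α = −6/v + 12/v² and β = −12/v², the following identity holds: ( (q−1)! / ((q−1−e)! · 2^{e/2} · (e/2)!) ) · α^{e/2} + (q−1) · ( (q−2)! / ((q−e)! · 2^{e/2−1} · (e/2−1)!) ) · β · α^{e/2−1} = ( (−3)^{e/2} (q−1)! / (q−e)! ) · Σ_{j=0}^{e/2} ( (q−e−2j) (−2)^j / ((e/2−j)! · j!) ) · v^{−(e/2+j)}. -/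
/-!
Put `x = 1/v` and `e = 2(m+1)`. Then `α = 2·(−3x)(1 − 2x)` and `β = −12x²`, so both sides are
`(−3x)^(m+1)` times polynomials in `y = −2x`. The coefficient `q − e − 2j` splits the right-hand
sum into `Σ y^j/((m+1−j)! j!) = (1+y)^(m+1)/(m+1)!`, which is the `α`-term, and
`Σ j y^j/((m+1−j)! j!) = y(1+y)^m/m!`, which is the `β`-term.
-/

open Finset
open scoped Nat

section ExponentialBinomial

variable {K : Type*} [Field K] [CharZero K]

theorem sum_pow_div_factorial_mul_factorial (y : K) (m : ℕ) :
    ∑ j ∈ range (m + 1), y ^ j / ((m - j)! * j ! : K) = (1 + y) ^ m / m ! := by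
  rw [add_comm 1 y, add_pow, sum_div]
  refine sum_congr rfl fun j hj => ?_
  rw [Nat.cast_choose K (Nat.lt_succ_iff.mp (mem_range.mp hj))]
  have := Nat.factorial_ne_zero m
  field_simp
  ring

theorem sum_mul_pow_div_factorial_mul_factorial (y : K) (m : ℕ) :
    ∑ j ∈ range (m + 2), j * y ^ j / ((m + 1 - j)! * j ! : K) = y * (1 + y) ^ m / m ! := by
  rw [sum_range_succ', mul_div_assoc y, ← sum_pow_div_factorial_mul_factorial, mul_sum]
  simp only [Nat.cast_zero, zero_mul, zero_div, add_zero]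
  refine sum_congr rfl fun j _ => ?_
  rw [Nat.add_sub_add_right, Nat.factorial_succ]
  push_cast
  field_simp
  ring

end ExponentialBinomial

theorem weyl_pairing_polynomial_identity {K : Type*} [Field K] [CharZero K] (m : ℕ) (r x : K) :
    r * (-6 * x + 12 * x ^ 2) ^ (m + 1) / (2 ^ (m + 1) * (m + 1)! : K)
      + -12 * x ^ 2 * (-6 * x + 12 * x ^ 2) ^ m / (2 ^ m * m ! : K)
      = (-3) ^ (m + 1) * ∑ j ∈ range (m + 2),
          (r - 2 * j) * (-2) ^ j / ((m + 1 - j)! * j ! : K) * x ^ (m + 1 + j) := by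
  have hsum : ∑ j ∈ range (m + 2), (r - 2 * j) * (-2) ^ j / ((m + 1 - j)! * j ! : K)
        * x ^ (m + 1 + j)
      = x ^ (m + 1) * (r * ∑ j ∈ range (m + 1 + 1), (-2 * x) ^ j / ((m + 1 - j)! * j ! : K)
          - 2 * ∑ j ∈ range (m + 2), j * (-2 * x) ^ j / ((m + 1 - j)! * j ! : K)) := by
    rw [mul_sum, mul_sum, ← sum_sub_distrib, mul_sum]
    refine sum_congr rfl fun j _ => ?_
    ring
  have hα : -6 * x + 12 * x ^ 2 = 2 * (-3 * x * (1 + -2 * x)) := by ring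
  rw [hsum, sum_pow_div_factorial_mul_factorial, sum_mul_pow_div_factorial_mul_factorial,
    Nat.factorial_succ, hα]
  simp only [mul_pow]
  push_cast
  field_simp
  ring

theorem weyl_invariant_pairing_identity_general (q e : ℕ) (he : Even e)
    (he2 : 2 ≤ e) (heq : e ≤ q - 1) (v : ℝ) :
    ((Nat.factorial (q - 1) : ℝ) /
        ((Nat.factorial (q - 1 - e) : ℝ) * 2 ^ (e / 2) * (Nat.factorial (e / 2) : ℝ))) *
        (-6 / v + 12 / v ^ 2) ^ (e / 2)
      + ((q : ℝ) - 1) * ((Nat.factorial (q - 2) : ℝ) /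
          ((Nat.factorial (q - e) : ℝ) * 2 ^ (e / 2 - 1) *
            (Nat.factorial (e / 2 - 1) : ℝ))) *
        (-12 / v ^ 2) * (-6 / v + 12 / v ^ 2) ^ (e / 2 - 1)
      = ((-3 : ℝ) ^ (e / 2) * (Nat.factorial (q - 1) : ℝ) / (Nat.factorial (q - e) : ℝ)) *
          ∑ j ∈ Finset.range (e / 2 + 1),
            (((q : ℝ) - (e : ℝ) - 2 * (j : ℝ)) * (-2 : ℝ) ^ j /
                ((Nat.factorial (e / 2 - j) : ℝ) * (Nat.factorial j : ℝ))) *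
              (v ^ (e / 2 + j))⁻¹ := by
  obtain ⟨m, rfl⟩ : ∃ m, e = 2 * (m + 1) := ⟨e / 2 - 1, by obtain ⟨k, hk⟩ := he; omega⟩
  obtain ⟨p, rfl⟩ : ∃ p, q = 2 * m + p + 3 := ⟨q - (2 * m + 3), by omega⟩
  rw [show 2 * (m + 1) / 2 = m + 1 by omega,
    show 2 * m + p + 3 - 1 = 2 * m + p + 1 + 1 by omega,
    show 2 * m + p + 1 + 1 - 2 * (m + 1) = p by omega,
    show 2 * m + p + 3 - 2 = 2 * m + p + 1 by omega,
    show 2 * m + p + 3 - 2 * (m + 1) = p + 1 by omega, Nat.add_sub_cancel]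
  have key := congrArg (fun t => ((2 * m + p + 1 + 1)! / (p + 1)! : ℝ) * t)
    (weyl_pairing_polynomial_identity m ((p : ℝ) + 1) v⁻¹)
  convert key using 1
  · simp only [Nat.factorial_succ]
    push_cast
    field_simp
    ring
  · rw [mul_sum, mul_sum, mul_sum]
    refine sum_congr rfl fun j _ => ?_
    push_cast
    ring

/-- the combinatorial identity behind Weyl's curvature invariant `H_e`:
for `q ≥ 3`, even `e` with `2 ≤ e ≤ q−1`, and `v ≠ 0`, setting `α = −6/v + 12/v²` and
`β = −12/v²`,
`((q−1)!/((q−1−e)! 2^{e/2} (e/2)!)) α^{e/2}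
 + (q−1)((q−2)!/((q−e)! 2^{e/2−1} (e/2−1)!)) β α^{e/2−1}
 = ((−3)^{e/2}(q−1)!/(q−e)!) Σ_{j=0}^{e/2} ((q−e−2j)(−2)^j/((e/2−j)! j!)) v^{−(e/2+j)}`. -/
theorem weyl_invariant_pairing_identity (q e : ℕ) (hq : 3 ≤ q) (he : Even e)
    (he2 : 2 ≤ e) (heq : e ≤ q - 1) (v : ℝ) (hv : v ≠ 0) :
    ((Nat.factorial (q - 1) : ℝ) /
        ((Nat.factorial (q - 1 - e) : ℝ) * 2 ^ (e / 2) * (Nat.factorial (e / 2) : ℝ))) *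
        (-6 / v + 12 / v ^ 2) ^ (e / 2)
      + ((q : ℝ) - 1) * ((Nat.factorial (q - 2) : ℝ) /
          ((Nat.factorial (q - e) : ℝ) * 2 ^ (e / 2 - 1) *
            (Nat.factorial (e / 2 - 1) : ℝ))) *
        (-12 / v ^ 2) * (-6 / v + 12 / v ^ 2) ^ (e / 2 - 1)
      = ((-3 : ℝ) ^ (e / 2) * (Nat.factorial (q - 1) : ℝ) / (Nat.factorial (q - e) : ℝ)) *
          ∑ j ∈ Finset.range (e / 2 + 1),
            (((q : ℝ) - (e : ℝ) - 2 * (j : ℝ)) * (-2 : ℝ) ^ j /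
                ((Nat.factorial (e / 2 - j) : ℝ) * (Nat.factorial j : ℝ))) *
              (v ^ (e / 2 + j))⁻¹ :=
  weyl_invariant_pairing_identity_general q e he he2 heq v
end

section
/- Let q ≥ 2, p = q³ + q⁴. Fix unit vectors h, h̃ ∈ S^{q−1} and θ, θ̃ ∈ (−π/2, π/2], write cos ψ = ⟨h, h̃⟩, and let x = x(h,θ), x̃ = x(h̃,θ̃). Let L ⊂ ℝ^p be the subspace spanned by x, x_θ = (−sin θ · h^{⊗3}, cos θ · h^{⊗4}), and the vectors D(u) for u ∈ ℝ^q with ⟨u, h⟩ = 0, and let P be the orthogonal projection of ℝ^p onto L. Then ⟨x̃, P x̃⟩ = cos⁶ψ cos²θ̃ + cos⁸ψ sin²θ̃ + sin²ψ · (3 cos²ψ cos θ̃ cos θ + 4 cos³ψ sin θ̃ sin θ)² / (3 cos²θ + 4 sin²θ). -/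
/-!
The vectors `x(h,θ)` and `x_θ` are orthonormal and orthogonal to every `D(u)` with `u ⊥ h`, and
`⟪D(u), D(v)⟫ = (3 cos²θ + 4 sin²θ) ⟪u, v⟫`. Splitting `h̃ = cos ψ · h + u₀` with `u₀ ⊥ h`, the
projection of `x̃` onto `L` is `⟪x, x̃⟫ x + ⟪x_θ, x̃⟫ x_θ + c · D(u₀)` for an explicit `c`: the
remainder is orthogonal to each generator of `L`. Every inner product involved reduces to
`⟪a ⊗ b ⊗ c, a' ⊗ b' ⊗ c'⟫ = ⟪a, a'⟫ ⟪b, b'⟫ ⟪c, c'⟫` and its fourfold analogue, and the formula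
follows from `⟪x, x̃⟫² + ⟪x_θ, x̃⟫² = cos⁶ψ cos²θ̃ + cos⁸ψ sin²θ̃` and `‖u₀‖² = sin²ψ`.
-/

open scoped RealInnerProductSpace BigOperators
open MeasureTheory ProbabilityTheory Real Filter

noncomputable section

/-- `L = span{x(h,θ), x_θ, D(u) (u ⊥ h)} = span{x} ⊕ T_x M ⊂ ℝ^p`. -/
def spanL {q : ℕ} (h : EuclideanSpace ℝ (Fin q)) (θ : ℝ) : Submodule ℝ (Rp q) :=
  Submodule.span ℝ
    ({xMap h θ, xTheta h θ} ∪
      {v | ∃ u : EuclideanSpace ℝ (Fin q), ⟪u, h⟫ = 0 ∧ v = Dvec h u θ})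

theorem Fintype.sum_prod_mul {α β R : Type*} [Fintype α] [Fintype β] [CommSemiring R]
    (f : α → R) (g : β → R) : ∑ i : α × β, f i.1 * g i.2 = (∑ a, f a) * ∑ b, g b := by
  rw [Fintype.sum_mul_sum, Fintype.sum_prod_type]

section Tensors

variable {q : ℕ}

def tensor3 (a b c : EuclideanSpace ℝ (Fin q)) : Rp q :=
  WithLp.toLp 2 (Sum.elim (fun i => a i.1 * b i.2.1 * c i.2.2) 0)

def tensor4 (a b c d : EuclideanSpace ℝ (Fin q)) : Rp q :=
  WithLp.toLp 2 (Sum.elim 0 (fun i => a i.1 * b i.2.1 * c i.2.2.1 * d i.2.2.2))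

theorem inner_tensor3_tensor3 (a b c a' b' c' : EuclideanSpace ℝ (Fin q)) :
    ⟪tensor3 a b c, tensor3 a' b' c'⟫ = ⟪a, a'⟫ * ⟪b, b'⟫ * ⟪c, c'⟫ := by
  simp only [tensor3, PiLp.inner_apply, Fintype.sum_sum_type, Sum.elim_inl, Sum.elim_inr,
    Pi.zero_apply, inner_zero_left, Finset.sum_const_zero, add_zero]
  rw [mul_assoc, ← Fintype.sum_prod_mul, ← Fintype.sum_prod_mul]
  exact Finset.sum_congr rfl fun _ _ => by simp only [RCLike.inner_apply, conj_trivial]; ring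

theorem inner_tensor4_tensor4 (a b c d a' b' c' d' : EuclideanSpace ℝ (Fin q)) :
    ⟪tensor4 a b c d, tensor4 a' b' c' d'⟫ = ⟪a, a'⟫ * ⟪b, b'⟫ * ⟪c, c'⟫ * ⟪d, d'⟫ := by
  simp only [tensor4, PiLp.inner_apply, Fintype.sum_sum_type, Sum.elim_inl, Sum.elim_inr,
    Pi.zero_apply, inner_zero_left, Finset.sum_const_zero, zero_add]
  rw [mul_assoc, mul_assoc, ← Fintype.sum_prod_mul, ← Fintype.sum_prod_mul,
    ← Fintype.sum_prod_mul]
  exact Finset.sum_congr rfl fun _ _ => by simp only [RCLike.inner_apply, conj_trivial]; ring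

theorem inner_tensor3_tensor4 (a b c a' b' c' d' : EuclideanSpace ℝ (Fin q)) :
    ⟪tensor3 a b c, tensor4 a' b' c' d'⟫ = 0 := by
  simp [tensor3, tensor4, PiLp.inner_apply, Fintype.sum_sum_type]

theorem inner_tensor4_tensor3 (a b c d a' b' c' : EuclideanSpace ℝ (Fin q)) :
    ⟪tensor4 a b c d, tensor3 a' b' c'⟫ = 0 := by
  rw [real_inner_comm, inner_tensor3_tensor4]

/-- `(a · h^{⊗3}, b · h^{⊗4}) ∈ ℝ^p`. -/
def kronPair (h : EuclideanSpace ℝ (Fin q)) (a b : ℝ) : Rp q :=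
  a • tensor3 h h h + b • tensor4 h h h h

theorem xMap_eq_kronPair (h : EuclideanSpace ℝ (Fin q)) (θ : ℝ) :
    xMap h θ = kronPair h (cos θ) (sin θ) := by
  ext (i | i) <;> simp [xMap, kronPair, tensor3, tensor4, kron3, kron4]

theorem xTheta_eq_kronPair (h : EuclideanSpace ℝ (Fin q)) (θ : ℝ) :
    xTheta h θ = kronPair h (-sin θ) (cos θ) := by
  ext (i | i) <;> simp [xTheta, kronPair, tensor3, tensor4, kron3, kron4]

theorem Dvec_eq_tensor (h u : EuclideanSpace ℝ (Fin q)) (θ : ℝ) :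
    Dvec h u θ = cos θ • (tensor3 u h h + tensor3 h u h + tensor3 h h u)
      + sin θ • (tensor4 u h h h + tensor4 h u h h + tensor4 h h u h + tensor4 h h h u) := by
  ext (i | i) <;> simp [Dvec, tensor3, tensor4] <;> ring

theorem inner_kronPair_kronPair (g h : EuclideanSpace ℝ (Fin q)) (a b c d : ℝ) :
    ⟪kronPair g a b, kronPair h c d⟫ = a * c * ⟪g, h⟫ ^ 3 + b * d * ⟪g, h⟫ ^ 4 := by
  simp only [kronPair, inner_add_left, inner_add_right, real_inner_smul_left,
    real_inner_smul_right, inner_tensor3_tensor3, inner_tensor3_tensor4, inner_tensor4_tensor3,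
    inner_tensor4_tensor4]
  ring

theorem inner_kronPair_Dvec (g h u : EuclideanSpace ℝ (Fin q)) (a b θ : ℝ) :
    ⟪kronPair g a b, Dvec h u θ⟫
      = (3 * a * cos θ * ⟪g, h⟫ ^ 2 + 4 * b * sin θ * ⟪g, h⟫ ^ 3) * ⟪g, u⟫ := by
  simp only [kronPair, Dvec_eq_tensor, inner_add_left, inner_add_right, real_inner_smul_left,
    real_inner_smul_right, inner_tensor3_tensor3, inner_tensor3_tensor4, inner_tensor4_tensor3,
    inner_tensor4_tensor4]
  ring

theorem inner_Dvec_kronPair (g h u : EuclideanSpace ℝ (Fin q)) (a b θ : ℝ) :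
    ⟪Dvec h u θ, kronPair g a b⟫
      = (3 * a * cos θ * ⟪g, h⟫ ^ 2 + 4 * b * sin θ * ⟪g, h⟫ ^ 3) * ⟪g, u⟫ := by
  rw [real_inner_comm, inner_kronPair_Dvec]

theorem inner_Dvec_Dvec {h u v : EuclideanSpace ℝ (Fin q)} (hh : ‖h‖ = 1)
    (hu : ⟪u, h⟫ = 0) (hv : ⟪v, h⟫ = 0) (θ : ℝ) :
    ⟪Dvec h u θ, Dvec h v θ⟫ = (3 * cos θ ^ 2 + 4 * sin θ ^ 2) * ⟪u, v⟫ := by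
  have hh' : ⟪h, h⟫ = 1 := by simp [hh]
  simp only [Dvec_eq_tensor, inner_add_left, inner_add_right, real_inner_smul_left,
    real_inner_smul_right, inner_tensor3_tensor3, inner_tensor3_tensor4, inner_tensor4_tensor3,
    inner_tensor4_tensor4, hh', hu, hv, real_inner_comm v h]
  ring

theorem inner_xMap_self {h : EuclideanSpace ℝ (Fin q)} (hh : ‖h‖ = 1) (θ : ℝ) :
    ⟪xMap h θ, xMap h θ⟫ = 1 := by
  rw [xMap_eq_kronPair, inner_kronPair_kronPair, real_inner_self_eq_norm_sq, hh]
  linear_combination cos_sq_add_sin_sq θ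

theorem inner_xTheta_self {h : EuclideanSpace ℝ (Fin q)} (hh : ‖h‖ = 1) (θ : ℝ) :
    ⟪xTheta h θ, xTheta h θ⟫ = 1 := by
  rw [xTheta_eq_kronPair, inner_kronPair_kronPair, real_inner_self_eq_norm_sq, hh]
  linear_combination sin_sq_add_cos_sq θ

theorem inner_xMap_xTheta {h : EuclideanSpace ℝ (Fin q)} (hh : ‖h‖ = 1) (θ : ℝ) :
    ⟪xMap h θ, xTheta h θ⟫ = 0 := by
  rw [xMap_eq_kronPair, xTheta_eq_kronPair, inner_kronPair_kronPair, real_inner_self_eq_norm_sq, hh]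
  ring

theorem inner_xMap_Dvec {h u : EuclideanSpace ℝ (Fin q)} (hu : ⟪u, h⟫ = 0) (α β : ℝ) :
    ⟪xMap h α, Dvec h u β⟫ = 0 := by
  rw [xMap_eq_kronPair, inner_kronPair_Dvec, real_inner_comm u h, hu, mul_zero]

theorem inner_xTheta_Dvec {h u : EuclideanSpace ℝ (Fin q)} (hu : ⟪u, h⟫ = 0) (α β : ℝ) :
    ⟪xTheta h α, Dvec h u β⟫ = 0 := by
  rw [xTheta_eq_kronPair, inner_kronPair_Dvec, real_inner_comm u h, hu, mul_zero]

end Tensors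

theorem Submodule.starProjection_span_eq {𝕜 E : Type*} [RCLike 𝕜] [NormedAddCommGroup E]
    [InnerProductSpace 𝕜 E] {s : Set E} [(span 𝕜 s).HasOrthogonalProjection] {x w : E}
    (hw : w ∈ span 𝕜 s) (hs : ∀ v ∈ s, inner 𝕜 v (x - w) = 0) :
    (span 𝕜 s).starProjection x = w := by
  refine eq_starProjection_of_mem_orthogonal hw ?_
  have : span 𝕜 s ⟂ span 𝕜 {x - w} := isOrtho_span.mpr fun v hv _ hy => by
    rw [Set.mem_singleton_iff.mp hy]; exact hs v hv
  exact this.symm (mem_span_singleton_self _)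

theorem starProjection_spanL_xMap {q : ℕ} {h ht : EuclideanSpace ℝ (Fin q)} (hh : ‖h‖ = 1)
    (θ θt : ℝ) :
    (spanL h θ).starProjection (xMap ht θt)
      = ⟪xMap h θ, xMap ht θt⟫ • xMap h θ + ⟪xTheta h θ, xMap ht θt⟫ • xTheta h θ
        -- `⟪x̃, D(u₀)⟫ / ‖D(u₀)‖²` with the common factor `‖u₀‖²` cancelled, so that `u₀ = 0` is
        -- covered as well.
        + ((3 * ⟪h, ht⟫ ^ 2 * cos θt * cos θ + 4 * ⟪h, ht⟫ ^ 3 * sin θt * sin θ)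
            / (3 * cos θ ^ 2 + 4 * sin θ ^ 2)) • Dvec h (ht - ⟪h, ht⟫ • h) θ := by
  set u₀ := ht - ⟪h, ht⟫ • h
  have hu₀ : ⟪u₀, h⟫ = 0 := by
    rw [inner_sub_left, real_inner_smul_left, real_inner_self_eq_norm_sq, hh, real_inner_comm]
    ring
  refine Submodule.starProjection_span_eq ?_ ?_
  · refine add_mem (add_mem ?_ ?_) ?_ <;> refine Submodule.smul_mem _ _ (Submodule.subset_span ?_)
    exacts [.inl (.inl rfl), .inl (.inr rfl), .inr ⟨u₀, hu₀, rfl⟩]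
  rintro v ((rfl | rfl) | ⟨u, hu, rfl⟩)
  · simp only [inner_sub_right, inner_add_right, real_inner_smul_right, inner_xMap_self hh,
      inner_xMap_xTheta hh, inner_xMap_Dvec hu₀]
    ring
  · simp only [inner_sub_right, inner_add_right, real_inner_smul_right, inner_xTheta_self hh,
      real_inner_comm (xMap h θ), inner_xMap_xTheta hh, inner_xTheta_Dvec hu₀]
    ring
  · have huu₀ : ⟪u, u₀⟫ = ⟪ht, u⟫ := by
      rw [inner_sub_right, real_inner_smul_right, hu, real_inner_comm ht u]; ring
    have hK : 3 * cos θ ^ 2 + 4 * sin θ ^ 2 ≠ 0 := by nlinarith [cos_sq_add_sin_sq θ]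
    simp only [inner_sub_right, inner_add_right, real_inner_smul_right, xMap_eq_kronPair ht,
      real_inner_comm (xMap h θ), real_inner_comm (xTheta h θ), inner_xMap_Dvec hu,
      inner_xTheta_Dvec hu, inner_Dvec_kronPair, inner_Dvec_Dvec hh hu hu₀, real_inner_comm h ht,
      huu₀]
    field_simp
    ring

theorem inner_projection_formula_general (q : ℕ)
    (h ht : EuclideanSpace ℝ (Fin q))
    (hh : h ∈ Metric.sphere (0 : EuclideanSpace ℝ (Fin q)) 1)
    (hht : ht ∈ Metric.sphere (0 : EuclideanSpace ℝ (Fin q)) 1)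
    (θ θt : ℝ)
    (ψ : ℝ) (hψ : Real.cos ψ = ⟪h, ht⟫) :
    ⟪xMap ht θt, (Submodule.orthogonalProjectionOnto (spanL h θ) (xMap ht θt) : Rp q)⟫
      = Real.cos ψ ^ 6 * Real.cos θt ^ 2 + Real.cos ψ ^ 8 * Real.sin θt ^ 2
        + Real.sin ψ ^ 2 *
            (3 * Real.cos ψ ^ 2 * Real.cos θt * Real.cos θ
              + 4 * Real.cos ψ ^ 3 * Real.sin θt * Real.sin θ) ^ 2 /
          (3 * Real.cos θ ^ 2 + 4 * Real.sin θ ^ 2) := by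
  rw [mem_sphere_zero_iff_norm] at hh hht
  have hψ' : ⟪ht, h⟫ = cos ψ := by rw [real_inner_comm, hψ]
  have hu₀ : ⟪ht, ht - cos ψ • h⟫ = sin ψ ^ 2 := by
    rw [inner_sub_right, real_inner_smul_right, real_inner_self_eq_norm_sq, hht, hψ', sin_sq]
    ring
  rw [Submodule.coe_orthogonalProjectionOnto_apply, starProjection_spanL_xMap hh]
  simp only [inner_add_right, real_inner_smul_right, xMap_eq_kronPair, xTheta_eq_kronPair,
    inner_kronPair_kronPair, inner_kronPair_Dvec, ← hψ, hψ', hu₀]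
  linear_combination (cos ψ ^ 6 * cos θt ^ 2 + cos ψ ^ 8 * sin θt ^ 2) * cos_sq_add_sin_sq θ

/-- with `P` the orthogonal projection onto `L = span{x} ⊕ T_x M`,
`⟨x̃, P x̃⟩ = cos⁶ψ cos²θ̃ + cos⁸ψ sin²θ̃
  + sin²ψ (3cos²ψ cos θ̃ cos θ + 4cos³ψ sin θ̃ sin θ)²/(3cos²θ + 4sin²θ)`,
where `cos ψ = ⟨h, h̃⟩`. -/
theorem inner_projection_formula (q : ℕ) (hq : 2 ≤ q)
    (h ht : EuclideanSpace ℝ (Fin q))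
    (hh : h ∈ Metric.sphere (0 : EuclideanSpace ℝ (Fin q)) 1)
    (hht : ht ∈ Metric.sphere (0 : EuclideanSpace ℝ (Fin q)) 1)
    (θ θt : ℝ) (hθ : θ ∈ Set.Ioc (-(π / 2)) (π / 2))
    (hθt : θt ∈ Set.Ioc (-(π / 2)) (π / 2))
    (ψ : ℝ) (hψ : Real.cos ψ = ⟪h, ht⟫) :
    ⟪xMap ht θt, (Submodule.orthogonalProjectionOnto (spanL h θ) (xMap ht θt) : Rp q)⟫
      = Real.cos ψ ^ 6 * Real.cos θt ^ 2 + Real.cos ψ ^ 8 * Real.sin θt ^ 2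
        + Real.sin ψ ^ 2 *
            (3 * Real.cos ψ ^ 2 * Real.cos θt * Real.cos θ
              + 4 * Real.cos ψ ^ 3 * Real.sin θt * Real.sin θ) ^ 2 /
          (3 * Real.cos θ ^ 2 + 4 * Real.sin θ ^ 2) :=
  inner_projection_formula_general q h ht hh hht θ θt ψ hψ

end
end

section
/- For all u ∈ [0, 1] and all k ≥ 0, 12 · ( (1+u)(3+u) + 4k ) / ( (3+u)(k + 3 + u)² ) ≤ 48 / ( (3+u)²(3−u) ) ≤ 16/9. For fixed u ∈ [0, 1], equality holds in the first inequality if and only if k = (3+u)(1−u)/2, and equality holds in the second inequality if and only if u = 0. -/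
/-- for all `u ∈ [0,1]` and `k ≥ 0`,
`12((1+u)(3+u)+4k)/((3+u)(k+3+u)²) ≤ 48/((3+u)²(3−u)) ≤ 16/9`,
with equality in the first inequality iff `k = (3+u)(1−u)/2`,
and equality in the second inequality iff `u = 0`. -/
theorem critical_ratio_optimization :
    (∀ u ∈ Set.Icc (0 : ℝ) 1, ∀ k : ℝ, 0 ≤ k →
      12 * ((1 + u) * (3 + u) + 4 * k) / ((3 + u) * (k + 3 + u) ^ 2)
        ≤ 48 / ((3 + u) ^ 2 * (3 - u)) ∧
      48 / ((3 + u) ^ 2 * (3 - u)) ≤ 16 / 9) ∧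
    (∀ u ∈ Set.Icc (0 : ℝ) 1, ∀ k : ℝ, 0 ≤ k →
      (12 * ((1 + u) * (3 + u) + 4 * k) / ((3 + u) * (k + 3 + u) ^ 2)
          = 48 / ((3 + u) ^ 2 * (3 - u)) ↔ k = (3 + u) * (1 - u) / 2)) ∧
    (∀ u ∈ Set.Icc (0 : ℝ) 1,
      (48 / ((3 + u) ^ 2 * (3 - u)) = 16 / 9 ↔ u = 0)) := by
  have key : ∀ u ∈ Set.Icc (0 : ℝ) 1, ∀ k : ℝ, 0 ≤ k →
      (0 < (3 + u) * (k + 3 + u) ^ 2) ∧ (0 < (3 + u) ^ 2 * (3 - u)) := by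
    rintro u ⟨h0, h1⟩ k hk
    have h3 : (0:ℝ) < 3 - u := by linarith
    constructor <;> positivity
  refine ⟨?_, ?_, ?_⟩
  · rintro u hu k hk
    obtain ⟨hd1, hd2⟩ := key u hu k hk
    obtain ⟨h0, h1⟩ := hu
    constructor
    · rw [div_le_div_iff₀ hd1 hd2]
      nlinarith [sq_nonneg (2 * k - (3 + u) * (1 - u)), sq_nonneg (k + 3 + u),
        mul_nonneg hk h0, sq_nonneg k, mul_nonneg (mul_nonneg hk hk) h0]
    · rw [div_le_div_iff₀ hd2 (by norm_num : (0:ℝ) < 9)]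
      nlinarith [mul_nonneg h0 h0, mul_nonneg (mul_nonneg h0 h0) h0]
  · rintro u hu k hk
    obtain ⟨hd1, hd2⟩ := key u hu k hk
    obtain ⟨h0, h1⟩ := hu
    rw [div_eq_div_iff hd1.ne' hd2.ne']
    constructor
    · intro h
      have hsq : (2 * k - (3 + u) * (1 - u)) ^ 2 = 0 := by nlinarith
      have := pow_eq_zero_iff (n := 2) (by norm_num) |>.mp hsq
      linarith
    · intro h
      subst h
      ring
  · rintro u ⟨h0, h1⟩
    have h3 : (0:ℝ) < 3 - u := by linarith
    have hd2 : (0:ℝ) < (3 + u) ^ 2 * (3 - u) := by positivity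
    rw [div_eq_div_iff hd2.ne' (by norm_num : (9:ℝ) ≠ 0)]
    constructor
    · intro h
      nlinarith [sq_nonneg u, mul_nonneg (mul_nonneg h0 h0) h0]
    · intro h; subst h; ring
end
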